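/- Let ξ be a standard normal random variable and a₁, a₂, b₁, b₂ ∈ ℝ with b₁ ≠ b₂. Then E[max(a₁ + b₁ξ, a₂ + b₂ξ)] − max(a₁, a₂) = −|a₂ − a₁|·Φ(−|a₂ − a₁|/|b₁ − b₂|) + |b₁ − b₂|·φ(|a₂ − a₁|/|b₁ − b₂|). -/

import Mathlib

open MeasureTheory ProbabilityTheory Real

noncomputable def stdNormalPDF (x : ℝ) : ℝ := (Real.sqrt (2 * π))⁻¹ * Real.exp (-x ^ 2 / 2)

noncomputable def stdNormalCDF (x : ℝ) : ℝ := ∫ u in Set.Iic x, stdNormalPDF u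

/-!
With `c = a₂ - a₁` and `d = b₂ - b₁` one has `max (a₁ + b₁ξ) (a₂ + b₂ξ) = a₁ + b₁ξ + (c + dξ)⁺`,
so the left-hand side is `E[(c + dξ)⁺] - c⁺`. Since `ξ` and `-ξ` have the same law, `d` may be
replaced by `|d|`, and `y⁺ = y + (-y)⁺` gives `E[(c + dξ)⁺] = c + E[(-c + dξ)⁺]`, so `c` may be
replaced by `-|c|`. The remaining expectation `E[(-|c| + |d|ξ)⁺]` is an integral of `φ` and of
`x φ(x) = -φ'(x)` over a half-line.
-/

open Set Filter Topology

instance (v : NNReal) : (gaussianReal 0 v).IsNegInvariant :=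
  ⟨by rw [Measure.neg_def]; simpa using gaussianReal_map_neg (μ := 0) (v := v)⟩

section NegInvariant

variable {μ : Measure ℝ} [μ.IsNegInvariant]

lemma integral_id_eq_zero_of_isNegInvariant : ∫ x, x ∂μ = 0 := by
  have h := integral_neg_eq_self (fun x : ℝ ↦ x) μ
  rw [integral_neg] at h
  linarith

lemma integral_max_add_mul_zero_eq_abs (c d : ℝ) :
    ∫ x, max (c + d * x) 0 ∂μ = ∫ x, max (c + |d| * x) 0 ∂μ := by
  rcases le_total 0 d with hd | hd
  · rw [abs_of_nonneg hd]
  · rw [abs_of_nonpos hd, ← integral_neg_eq_self]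
    simp only [mul_neg, neg_mul]

variable [IsProbabilityMeasure μ]

lemma integral_add_mul_of_isNegInvariant (hμ : Integrable (fun x ↦ x) μ) (a b : ℝ) :
    ∫ x, a + b * x ∂μ = a := by
  rw [integral_add (integrable_const a) (hμ.const_mul b), integral_const_mul,
    integral_id_eq_zero_of_isNegInvariant]
  simp

lemma integral_max_add_mul_zero_eq_add_neg (hμ : Integrable (fun x ↦ x) μ) (c d : ℝ) :
    ∫ x, max (c + d * x) 0 ∂μ = c + ∫ x, max (-c + d * x) 0 ∂μ := by
  have hsplit : ∀ x, max (c + d * x) 0 = (c + d * x) + max (-(c + d * x)) 0 :=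
    fun x ↦ eq_add_of_sub_eq (max_zero_sub_max_neg_zero_eq_self _)
  have haff : Integrable (fun x ↦ c + d * x) μ := (integrable_const c).add (hμ.const_mul d)
  simp_rw [hsplit]
  rw [integral_add haff haff.neg_part, integral_add_mul_of_isNegInvariant hμ,
    ← integral_neg_eq_self]
  simp only [neg_add, mul_neg, neg_neg]

lemma integral_max_add_mul_zero_sub_max (hμ : Integrable (fun x ↦ x) μ) (c d : ℝ) :
    ∫ x, max (c + d * x) 0 ∂μ - max c 0 = ∫ x, max (-|c| + |d| * x) 0 ∂μ := by
  rw [integral_max_add_mul_zero_eq_abs]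
  rcases le_total 0 c with hc | hc
  · rw [integral_max_add_mul_zero_eq_add_neg hμ, max_eq_left hc, abs_of_nonneg hc]
    ring
  · rw [max_eq_right hc, abs_of_nonpos hc, neg_neg, sub_zero]

lemma integral_max_add_mul_add_mul (hμ : Integrable (fun x ↦ x) μ) (a₁ a₂ b₁ b₂ : ℝ) :
    ∫ x, max (a₁ + b₁ * x) (a₂ + b₂ * x) ∂μ
      = a₁ + ∫ x, max ((a₂ - a₁) + (b₂ - b₁) * x) 0 ∂μ := by
  have hsplit : ∀ x, max (a₁ + b₁ * x) (a₂ + b₂ * x)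
      = (a₁ + b₁ * x) + max ((a₂ - a₁) + (b₂ - b₁) * x) 0 := fun x ↦ by
    rw [← max_add_add_left, add_zero, max_comm (a₁ + b₁ * x)]; congr 1; ring
  have haff : ∀ a b : ℝ, Integrable (fun x ↦ a + b * x) μ :=
    fun a b ↦ (integrable_const a).add (hμ.const_mul b)
  simp_rw [hsplit]
  rw [integral_add (haff _ _) (haff _ _).pos_part, integral_add_mul_of_isNegInvariant hμ]

end NegInvariant

lemma stdNormalPDF_eq_gaussianPDFReal : stdNormalPDF = gaussianPDFReal 0 1 := by
  funext x
  simp [stdNormalPDF, gaussianPDFReal]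

lemma stdNormalPDF_neg (x : ℝ) : stdNormalPDF (-x) = stdNormalPDF x := by
  simp [stdNormalPDF]

lemma integral_gaussianReal_eq_integral_stdNormalPDF_mul (f : ℝ → ℝ) :
    ∫ x, f x ∂gaussianReal 0 1 = ∫ x, stdNormalPDF x * f x := by
  rw [integral_gaussianReal_eq_integral_smul one_ne_zero, stdNormalPDF_eq_gaussianPDFReal]
  rfl

lemma integrable_stdNormalPDF : Integrable stdNormalPDF := by
  rw [stdNormalPDF_eq_gaussianPDFReal]
  exact integrable_gaussianPDFReal 0 1

lemma integrable_mul_stdNormalPDF : Integrable fun x ↦ x * stdNormalPDF x := by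
  refine ((integrable_mul_exp_neg_mul_sq (by norm_num : (0 : ℝ) < 1 / 2)).const_mul
    (√(2 * π))⁻¹).congr (ae_of_all _ fun x ↦ ?_)
  simp only [stdNormalPDF]
  rw [show -x ^ 2 / 2 = -(1 / 2) * x ^ 2 by ring]
  ring

lemma hasDerivAt_stdNormalPDF (x : ℝ) :
    HasDerivAt stdNormalPDF (-(x * stdNormalPDF x)) x := by
  have h : HasDerivAt (fun y : ℝ ↦ -y ^ 2 / 2) (-x) x :=
    ((hasDerivAt_pow 2 x).neg.div_const 2).congr_deriv (by ring)
  refine (h.exp.const_mul (√(2 * π))⁻¹).congr_deriv ?_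
  simp only [stdNormalPDF]
  ring

lemma tendsto_stdNormalPDF_atTop : Tendsto stdNormalPDF atTop (𝓝 0) := by
  have h : Tendsto (fun x : ℝ ↦ -x ^ 2 / 2) atTop atBot := by
    simpa [neg_div] using (tendsto_pow_atTop two_ne_zero).atTop_div_const (two_pos : (0 : ℝ) < 2)
  unfold stdNormalPDF
  simpa using (tendsto_exp_atBot.comp h).const_mul (√(2 * π))⁻¹

lemma integral_Ioi_mul_stdNormalPDF (t : ℝ) :
    ∫ x in Ioi t, x * stdNormalPDF x = stdNormalPDF t := by
  have h := integral_Ioi_of_hasDerivAt_of_tendsto' (a := t)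
    (fun x _ ↦ (hasDerivAt_stdNormalPDF x).neg.congr_deriv (neg_neg _))
    integrable_mul_stdNormalPDF.integrableOn tendsto_stdNormalPDF_atTop.neg
  simpa using h

lemma integral_Ioi_stdNormalPDF (t : ℝ) :
    ∫ x in Ioi t, stdNormalPDF x = stdNormalCDF (-t) := by
  unfold stdNormalCDF
  rw [← integral_comp_neg_Ioi]
  simp only [stdNormalPDF_neg]

lemma integral_max_add_mul_zero_gaussianReal (c : ℝ) {s : ℝ} (hs : 0 < s) :
    ∫ x, max (c + s * x) 0 ∂gaussianReal 0 1
      = c * stdNormalCDF (c / s) + s * stdNormalPDF (c / s) := by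
  have hind : ∀ x, stdNormalPDF x * max (c + s * x) 0
      = (Ioi (-c / s)).indicator (fun x ↦ c * stdNormalPDF x + s * (x * stdNormalPDF x)) x := by
    intro x
    by_cases hx : x ∈ Ioi (-c / s)
    · have : 0 ≤ c + s * x := by rw [mem_Ioi, div_lt_iff₀ hs] at hx; linarith
      rw [indicator_of_mem hx, max_eq_left this]; ring
    · have : c + s * x ≤ 0 := by rw [mem_Ioi, not_lt, le_div_iff₀ hs] at hx; linarith
      rw [indicator_of_notMem hx, max_eq_right this, mul_zero]
  rw [integral_gaussianReal_eq_integral_stdNormalPDF_mul, integral_congr_ae (ae_of_all _ hind),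
    integral_indicator measurableSet_Ioi,
    integral_add (integrable_stdNormalPDF.const_mul c).integrableOn
      (integrable_mul_stdNormalPDF.const_mul s).integrableOn,
    integral_const_mul, integral_const_mul, integral_Ioi_stdNormalPDF,
    integral_Ioi_mul_stdNormalPDF, neg_div, neg_neg, stdNormalPDF_neg]

/-- Closed form of the one-step knowledge gradient value. -/
theorem stmt_6 (a₁ a₂ b₁ b₂ : ℝ) (hb : b₁ ≠ b₂) :
    (∫ x, max (a₁ + b₁ * x) (a₂ + b₂ * x) ∂(gaussianReal 0 1)) - max a₁ a₂ =
      -|a₂ - a₁| * stdNormalCDF (-|a₂ - a₁| / |b₁ - b₂|)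
        + |b₁ - b₂| * stdNormalPDF (|a₂ - a₁| / |b₁ - b₂|) := by
  have hid : Integrable (fun x ↦ x) (gaussianReal 0 1) :=
    memLp_one_iff_integrable.mp (memLp_id_gaussianReal 1)
  have hs : 0 < |b₂ - b₁| := abs_pos.mpr (sub_ne_zero.mpr hb.symm)
  have hmax : max a₁ a₂ = a₁ + max (a₂ - a₁) 0 := by
    rw [← max_add_add_left, add_sub_cancel, add_zero, max_comm]
  rw [integral_max_add_mul_add_mul hid, hmax, add_sub_add_left_eq_sub,
    integral_max_add_mul_zero_sub_max hid, integral_max_add_mul_zero_gaussianReal _ hs,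
    abs_sub_comm b₂ b₁, neg_div, stdNormalPDF_neg]
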